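/- arXiv:2302.11174 — 2 statements merged into one kernel-verified Lean document; each statement's English description precedes it below -/
import Mathlib

section
/- If a shift-invariant kernel k satisfies the Bochner representation k(x, x') = E[cos(⟨x − x', W⟩)] for W ∼ ρ, and Z(x) = √2·cos(⟨x, W⟩ + U) with U uniform on [0, 2π] independent of W, then the random feature approximation is unbiased: E[Z(x)Z(x')] = k(x, x') for all x, x' ∈ ℝ^d. -/
open MeasureTheory Real ProbabilityTheory

open scoped RealInnerProductSpace

/-! Product-to-sum turns `Z x * Z x'` into `cos ⟪x - x', W⟫ + cos (⟪x + x', W⟫ + 2 U)`.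
The first term has expectation `k x x'`. By independence and Fubini, the expectation of the
second is an average over `W` of integrals of `cos (c + 2 u)` over a full period of the uniform
phase `u`, each of which vanishes. -/

lemma sqrt_two_mul_cos_add_mul_sqrt_two_mul_cos_add (a b u : ℝ) :
    (√2 * cos (a + u)) * (√2 * cos (b + u)) = cos (a - b) + cos (a + b + 2 * u) := by
  calc (√2 * cos (a + u)) * (√2 * cos (b + u))
      = (√2 * √2) * cos (a + u) * cos (b + u) := by ring
    _ = cos ((a + u) - (b + u)) + cos ((a + u) + (b + u)) := by
      rw [mul_self_sqrt zero_le_two, two_mul_cos_mul_cos]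
    _ = cos (a - b) + cos (a + b + 2 * u) := by ring_nf

lemma integral_cos_add_int_mul_Icc (c : ℝ) {n : ℤ} (hn : n ≠ 0) :
    ∫ u in Set.Icc 0 (2 * π), cos (c + n * u) = 0 := by
  rw [integral_Icc_eq_integral_Ioc, ← intervalIntegral.integral_of_le two_pi_pos.le]
  simp_rw [add_comm c]
  rw [intervalIntegral.integral_comp_mul_add cos (Int.cast_ne_zero.mpr hn), integral_cos,
    mul_zero, zero_add, add_comm, sin_add_int_mul_two_pi, sub_self, smul_zero]

lemma integral_cos_add_int_mul_uniform (c : ℝ) {n : ℤ} (hn : n ≠ 0) :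
    ∫ u, cos (c + n * u) ∂((ENNReal.ofReal (2 * π))⁻¹ • volume.restrict (Set.Icc 0 (2 * π)))
      = 0 := by
  rw [integral_smul_measure, integral_cos_add_int_mul_Icc c hn, smul_zero]

lemma integrable_cos_comp {α : Type*} [MeasurableSpace α] {ν : Measure α} [IsFiniteMeasure ν]
    {f : α → ℝ} (hf : Measurable f) : Integrable (fun a ↦ cos (f a)) ν :=
  .of_bound (measurable_cos.comp hf).aestronglyMeasurable 1
    (.of_forall fun a ↦ by simpa using abs_cos_le_one (f a))

lemma ProbabilityTheory.IndepFun.integral_comp_prodMk {Ω α β : Type*} [MeasurableSpace Ω]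
    [MeasurableSpace α] [MeasurableSpace β] {μ : Measure Ω} [IsFiniteMeasure μ]
    {X : Ω → α} {Y : Ω → β}
    (hXY : IndepFun X Y μ) (hX : Measurable X) (hY : Measurable Y) {F : α × β → ℝ}
    (hF : Integrable F ((μ.map X).prod (μ.map Y))) :
    ∫ ω, F (X ω, Y ω) ∂μ = ∫ a, ∫ b, F (a, b) ∂(μ.map Y) ∂(μ.map X) := by
  have hmap := hXY.map_prod_eq_prod_map_map hX.aemeasurable hY.aemeasurable
  rw [← integral_prod _ hF, ← hmap,
    integral_map (hX.prodMk hY).aemeasurable (hmap ▸ hF).aestronglyMeasurable]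

/-- If `k(x,x') = E[cos ⟨x - x', W⟩]` (Bochner representation) and
`Z(x) = √2 cos(⟨x,W⟩ + U)` with `U` uniform on `[0,2π]` independent of `W`, then
the random feature approximation is unbiased: `E[Z(x) Z(x')] = k(x,x')`. -/
theorem random_features_unbiased
    {Ω : Type*} [MeasurableSpace Ω] (μ : Measure Ω) [IsProbabilityMeasure μ]
    {d : ℕ} (W : Ω → EuclideanSpace ℝ (Fin d)) (U : Ω → ℝ)
    (hW : Measurable W) (hUm : Measurable U)
    (hU : Measure.map U μ
      = (ENNReal.ofReal (2 * π))⁻¹ • volume.restrict (Set.Icc 0 (2 * π)))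
    (hindep : IndepFun W U μ)
    (k : EuclideanSpace ℝ (Fin d) → EuclideanSpace ℝ (Fin d) → ℝ)
    (hk : ∀ x x', k x x' = ∫ ω, Real.cos ⟪x - x', W ω⟫ ∂μ)
    (Z : EuclideanSpace ℝ (Fin d) → Ω → ℝ)
    (hZ : ∀ x ω, Z x ω = Real.sqrt 2 * Real.cos (⟪x, W ω⟫ + U ω))
    (x x' : EuclideanSpace ℝ (Fin d)) :
    ∫ ω, Z x ω * Z x' ω ∂μ = k x x' := by
  have hZZ : ∀ ω, Z x ω * Z x' ω = cos ⟪x - x', W ω⟫ + cos (⟪x + x', W ω⟫ + 2 * U ω) := by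
    intro ω
    rw [hZ, hZ, inner_sub_left, inner_add_left]
    exact sqrt_two_mul_cos_add_mul_sqrt_two_mul_cos_add _ _ _
  have hphase : ∫ ω, cos (⟪x + x', W ω⟫ + 2 * U ω) ∂μ = 0 := by
    have hF : Measurable fun p : EuclideanSpace ℝ (Fin d) × ℝ ↦ ⟪x + x', p.1⟫ + 2 * p.2 := by
      fun_prop
    rw [hindep.integral_comp_prodMk hW hUm (F := fun p ↦ cos (⟪x + x', p.1⟫ + 2 * p.2))
      (integrable_cos_comp hF)]
    have hinner : ∀ w : EuclideanSpace ℝ (Fin d),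
        ∫ u, cos (⟪x + x', w⟫ + 2 * u) ∂(μ.map U) = 0 := fun w ↦ by
      rw [hU]
      exact_mod_cast integral_cos_add_int_mul_uniform ⟪x + x', w⟫ (n := 2) two_ne_zero
    simp only [hinner, integral_zero]
  rw [integral_congr_ae (.of_forall hZZ),
    integral_add (integrable_cos_comp (by fun_prop)) (integrable_cos_comp (by fun_prop)),
    hphase, add_zero, hk]
end

section
/- Let Z(x) = √2·cos(⟨x, W⟩ + U) with U uniform on [0, 2π] independent of W, and let k(x,x') = E[Z(x)Z(x')]. Then for all x, x' ∈ ℝ^d, Var(Z(x)Z(x')) ≥ 1/2. -/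
open MeasureTheory Real ProbabilityTheory

open scoped RealInnerProductSpace

/-! Writing `Y = Z(x) Z(x')` by the product-to-sum formula as
`cos ⟪x - x', W⟫ + cos (⟪x + x', W⟫ + 2U)`, the second term has, conditionally on `W`, mean `0`
and second moment `1/2`, since `2U` runs uniformly over two full periods. Hence
`E[Y] = E[cos ⟪x - x', W⟫]` and `E[Y²] = E[cos² ⟪x - x', W⟫] + 1/2`, and Jensen's inequality
for the square gives `Var Y ≥ 1/2`. -/

lemma sqrt_two_mul_cos_mul_sqrt_two_mul_cos (a b : ℝ) :
    √2 * cos a * (√2 * cos b) = cos (a - b) + cos (a + b) := by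
  rw [cos_sub, cos_add]
  linear_combination cos a * cos b * Real.mul_self_sqrt (zero_le_two : (0:ℝ) ≤ 2)

lemma intervalIntegral_cos_add_int_mul (c : ℝ) {n : ℤ} (hn : n ≠ 0) :
    ∫ u in (0)..(2 * π), cos (c + n * u) = 0 := by
  rw [intervalIntegral.integral_comp_add_mul _ (Int.cast_ne_zero.mpr hn), integral_cos,
    sin_add_int_mul_two_pi]
  simp

lemma intervalIntegral_add_cos_add_two_mul (a c : ℝ) :
    ∫ u in (0)..(2 * π), (a + cos (c + 2 * u)) = 2 * π * a := by
  have h := intervalIntegral_cos_add_int_mul c (n := 2) two_ne_zero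
  push_cast at h
  rw [intervalIntegral.integral_add intervalIntegrable_const
    (Continuous.intervalIntegrable (by fun_prop) _ _), h]
  simp

lemma intervalIntegral_add_cos_add_two_mul_sq (a c : ℝ) :
    ∫ u in (0)..(2 * π), (a + cos (c + 2 * u)) ^ 2 = 2 * π * (a ^ 2 + 1 / 2) := by
  have h2 := intervalIntegral_cos_add_int_mul c (n := 2) two_ne_zero
  have h4 := intervalIntegral_cos_add_int_mul (2 * c) (n := 4) four_ne_zero
  push_cast at h2 h4
  have expand : ∀ u, (a + cos (c + 2 * u)) ^ 2
      = (a ^ 2 + 1 / 2) + (2 * a * cos (c + 2 * u) + cos (2 * c + 4 * u) / 2) := by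
    intro u
    have h := cos_sq (c + 2 * u)
    rw [show 2 * (c + 2 * u) = 2 * c + 4 * u by ring] at h
    linear_combination h
  simp_rw [expand]
  rw [intervalIntegral.integral_add intervalIntegrable_const
      (Continuous.intervalIntegrable (by fun_prop) _ _),
    intervalIntegral.integral_add (f := fun u => 2 * a * cos (c + 2 * u))
      (Continuous.intervalIntegrable (by fun_prop) _ _)
      (Continuous.intervalIntegrable (by fun_prop) _ _),
    intervalIntegral.integral_const_mul, intervalIntegral.integral_div, h2, h4]
  simp only [intervalIntegral.integral_const, sub_zero, smul_eq_mul, mul_zero, zero_div, add_zero]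

local notation "𝒰" => (ENNReal.ofReal (2 * π))⁻¹ • volume.restrict (Set.Icc (0 : ℝ) (2 * π))

lemma integral_uniformAngle (f : ℝ → ℝ) :
    ∫ u, f u ∂𝒰 = (2 * π)⁻¹ * ∫ u in (0)..(2 * π), f u := by
  rw [integral_smul_measure, integral_Icc_eq_integral_Ioc,
    ← intervalIntegral.integral_of_le two_pi_pos.le, ENNReal.toReal_inv,
    ENNReal.toReal_ofReal two_pi_pos.le, smul_eq_mul]

lemma integral_add_cos_add_two_mul_uniformAngle (a c : ℝ) :
    ∫ u, (a + cos (c + 2 * u)) ∂𝒰 = a := by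
  rw [integral_uniformAngle, intervalIntegral_add_cos_add_two_mul]
  field_simp

lemma integral_add_cos_add_two_mul_sq_uniformAngle (a c : ℝ) :
    ∫ u, (a + cos (c + 2 * u)) ^ 2 ∂𝒰 = a ^ 2 + 1 / 2 := by
  rw [integral_uniformAngle, intervalIntegral_add_cos_add_two_mul_sq]
  field_simp

lemma ProbabilityTheory.IndepFun.integral_comp_eq_integral_integral {Ω α β E : Type*}
    [MeasurableSpace Ω] [MeasurableSpace α] [MeasurableSpace β]
    [NormedAddCommGroup E] [NormedSpace ℝ E]
    {μ : Measure Ω} [IsFiniteMeasure μ] {X : Ω → α} {Y : Ω → β}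
    (hXY : IndepFun X Y μ) (hX : AEMeasurable X μ) (hY : AEMeasurable Y μ)
    {F : α × β → E} (hF : Integrable F ((μ.map X).prod (μ.map Y))) :
    ∫ ω, F (X ω, Y ω) ∂μ = ∫ x, ∫ y, F (x, y) ∂(μ.map Y) ∂(μ.map X) := by
  have hlaw := hXY.map_prod_eq_prod_map_map hX hY
  rw [← integral_prod F hF, ← hlaw, integral_map (hX.prodMk hY) (hlaw ▸ hF.aestronglyMeasurable)]

lemma sq_integral_le_integral_sq {α : Type*} [MeasurableSpace α] {μ : Measure α}
    [IsProbabilityMeasure μ] {f : α → ℝ} (hf : MemLp f 2 μ) :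
    (∫ x, f x ∂μ) ^ 2 ≤ ∫ x, f x ^ 2 ∂μ := by
  have h := variance_nonneg f μ
  rw [variance_eq_sub hf] at h
  simpa [sub_nonneg] using h

section UniformPhase

variable {Ω α : Type*} [MeasurableSpace Ω] [MeasurableSpace α] {a c : α → ℝ} {C : ℝ}

lemma memLp_add_cos_add_two_mul {ν : Measure (α × ℝ)} [IsFiniteMeasure ν] (ha : Measurable a)
    (hc : Measurable c) (haC : ∀ w, |a w| ≤ C) :
    MemLp (fun p : α × ℝ => a p.1 + cos (c p.1 + 2 * p.2)) 2 ν :=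
  .of_bound (by fun_prop) (C + 1) (.of_forall fun p =>
    (abs_add_le _ _).trans (add_le_add (haC _) (abs_cos_le_one _)))

variable {μ : Measure Ω} [IsProbabilityMeasure μ] {W : Ω → α} {U : Ω → ℝ}

lemma integral_add_cos_add_two_mul_of_indepFun (hW : Measurable W) (hUm : Measurable U)
    (hU : μ.map U = 𝒰) (hindep : IndepFun W U μ) (ha : Measurable a) (hc : Measurable c)
    (haC : ∀ w, |a w| ≤ C) :
    ∫ ω, (a (W ω) + cos (c (W ω) + 2 * U ω)) ∂μ = ∫ w, a w ∂(μ.map W) := by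
  rw [hindep.integral_comp_eq_integral_integral hW.aemeasurable hUm.aemeasurable
    ((memLp_add_cos_add_two_mul ha hc haC).integrable one_le_two), hU]
  simp_rw [integral_add_cos_add_two_mul_uniformAngle]

lemma integral_add_cos_add_two_mul_sq_of_indepFun (hW : Measurable W) (hUm : Measurable U)
    (hU : μ.map U = 𝒰) (hindep : IndepFun W U μ) (ha : Measurable a) (hc : Measurable c)
    (haC : ∀ w, |a w| ≤ C) :
    ∫ ω, (a (W ω) + cos (c (W ω) + 2 * U ω)) ^ 2 ∂μ = ∫ w, a w ^ 2 ∂(μ.map W) + 1 / 2 := by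
  rw [hindep.integral_comp_eq_integral_integral hW.aemeasurable hUm.aemeasurable
    (memLp_add_cos_add_two_mul ha hc haC).integrable_sq, hU]
  simp_rw [integral_add_cos_add_two_mul_sq_uniformAngle]
  have ha2 : Integrable (fun w => a w ^ 2) (μ.map W) :=
    (MemLp.of_bound ha.aestronglyMeasurable C (.of_forall haC)).integrable_sq
  have : IsProbabilityMeasure (μ.map W) := Measure.isProbabilityMeasure_map hW.aemeasurable
  rw [integral_add ha2 (integrable_const _), integral_const, probReal_univ, one_smul]

end UniformPhase

theorem variance_random_features_product_ge_half_general
    {Ω : Type*} [MeasurableSpace Ω] (μ : Measure Ω) [IsProbabilityMeasure μ]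
    {d : ℕ} (W : Ω → EuclideanSpace ℝ (Fin d)) (U : Ω → ℝ)
    (hW : Measurable W) (hUm : Measurable U)
    (hU : Measure.map U μ
      = (ENNReal.ofReal (2 * π))⁻¹ • volume.restrict (Set.Icc 0 (2 * π)))
    (hindep : IndepFun W U μ)
    (Z : EuclideanSpace ℝ (Fin d) → Ω → ℝ)
    (hZ : ∀ x ω, Z x ω = Real.sqrt 2 * Real.cos (⟪x, W ω⟫ + U ω))
    (x x' : EuclideanSpace ℝ (Fin d)) :
    (∫ ω, (Z x ω * Z x' ω) ^ 2 ∂μ) - (∫ ω, Z x ω * Z x' ω ∂μ) ^ 2 ≥ 1 / 2 := by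
  set a := fun w => cos ⟪x - x', w⟫
  set c := fun w => ⟪x + x', w⟫
  have hY : ∀ ω, Z x ω * Z x' ω = a (W ω) + cos (c (W ω) + 2 * U ω) := by
    intro ω
    rw [hZ, hZ, sqrt_two_mul_cos_mul_sqrt_two_mul_cos]
    simp only [a, c, inner_sub_left, inner_add_left]
    ring_nf
  have ha : Measurable a := by fun_prop
  have hc : Measurable c := by fun_prop
  have haC : ∀ w, |a w| ≤ 1 := fun w => abs_cos_le_one _
  simp_rw [hY, integral_add_cos_add_two_mul_of_indepFun hW hUm hU hindep ha hc haC,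
    integral_add_cos_add_two_mul_sq_of_indepFun hW hUm hU hindep ha hc haC]
  have : IsProbabilityMeasure (μ.map W) := Measure.isProbabilityMeasure_map hW.aemeasurable
  have hJensen := sq_integral_le_integral_sq (μ := μ.map W)
    (.of_bound ha.aestronglyMeasurable 1 (.of_forall haC))
  linarith

/-- For `Z(x) = √2 cos(⟨x,W⟩ + U)` with `U` uniform on `[0,2π]` independent of `W`,
and `k(x,x') = E[Z(x) Z(x')]`, the variance `E[Y²] - (E[Y])²` of `Y = Z(x) Z(x')`
is at least `1/2`. -/
theorem variance_random_features_product_ge_half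
    {Ω : Type*} [MeasurableSpace Ω] (μ : Measure Ω) [IsProbabilityMeasure μ]
    {d : ℕ} (W : Ω → EuclideanSpace ℝ (Fin d)) (U : Ω → ℝ)
    (hW : Measurable W) (hUm : Measurable U)
    (hU : Measure.map U μ
      = (ENNReal.ofReal (2 * π))⁻¹ • volume.restrict (Set.Icc 0 (2 * π)))
    (hindep : IndepFun W U μ)
    (Z : EuclideanSpace ℝ (Fin d) → Ω → ℝ)
    (hZ : ∀ x ω, Z x ω = Real.sqrt 2 * Real.cos (⟪x, W ω⟫ + U ω))
    (k : EuclideanSpace ℝ (Fin d) → EuclideanSpace ℝ (Fin d) → ℝ)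
    (hk : ∀ x x', k x x' = ∫ ω, Z x ω * Z x' ω ∂μ)
    (x x' : EuclideanSpace ℝ (Fin d)) :
    (∫ ω, (Z x ω * Z x' ω) ^ 2 ∂μ) - (∫ ω, Z x ω * Z x' ω ∂μ) ^ 2 ≥ 1 / 2 :=
  variance_random_features_product_ge_half_general μ W U hW hUm hU hindep Z hZ x x'
end
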